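/- For a finite set D of data points (m-tuples of equal-length bitstrings) and a query q (an m-tuple of equal-length bitstrings matching coordinate-wise lengths of the data points), the cardinality of {d ∈ D : d is coordinate-wise strictly less than q} equals the sum over d ∈ D of |P0(d) ∩ P1(q)|. -/
import Mathlib


/-- Numeric value of a bitstring, most significant bit first. -/
def bval (x : List Bool) : ℕ := x.foldl (fun n b => 2 * n + b.toNat) 0

/-- `P0 x` is the set of bitstrings `v` such that `v ++ [0]` is a prefix of `x`. -/
def P0 (x : List Bool) : Set (List Bool) := {v | v ++ [false] <+: x}

/-- `P1 x` is the set of bitstrings `v` such that `v ++ [1]` is a prefix of `x`. -/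
def P1 (x : List Bool) : Set (List Bool) := {v | v ++ [true] <+: x}

/-- Coordinate-wise `P0` on tuples of bitstrings (Cartesian product). -/
def P0v {m : ℕ} (x : Fin m → List Bool) : Set (Fin m → List Bool) := {v | ∀ i, v i ∈ P0 (x i)}

/-- Coordinate-wise `P1` on tuples of bitstrings (Cartesian product). -/
def P1v {m : ℕ} (x : Fin m → List Bool) : Set (Fin m → List Bool) := {v | ∀ i, v i ∈ P1 (x i)}

lemma foldl_bval (x : List Bool) (n : ℕ) :
    x.foldl (fun n b => 2 * n + b.toNat) n = n * 2 ^ x.length + bval x := by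
  induction x generalizing n with
  | nil => simp [bval]
  | cons a x ih =>
    simp only [List.foldl_cons, List.length_cons, bval, Nat.mul_zero, Nat.zero_add]
    rw [ih, ih]
    ring

lemma bval_cons (a : Bool) (x : List Bool) :
    bval (a :: x) = a.toNat * 2 ^ x.length + bval x := by
  show (a :: x).foldl (fun n b => 2 * n + b.toNat) 0 = _
  rw [List.foldl_cons]
  rw [foldl_bval]
  simp

lemma bval_lt_pow (x : List Bool) : bval x < 2 ^ x.length := by
  induction x with
  | nil => simp [bval]
  | cons a x ih =>
    rw [bval_cons, List.length_cons, pow_succ]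
    cases a <;> simp <;> omega

lemma key (x : List Bool) : ∀ q : List Bool, x.length = q.length →
    (bval x < bval q ∧ ∃ v, P0 x ∩ P1 q = {v}) ∨
    (¬ bval x < bval q ∧ P0 x ∩ P1 q = (∅ : Set (List Bool))) := by
  induction x with
  | nil =>
    rintro q hq
    obtain rfl : q = [] := by simpa using (List.length_eq_zero_iff.mp hq.symm)
    right
    constructor
    · simp
    · ext v
      simp only [Set.mem_inter_iff, Set.mem_empty_iff_false, iff_false, P0, P1, Set.mem_setOf_eq]
      rintro ⟨h0, -⟩
      have := h0.length_le
      simp at this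
  | cons a x ih =>
    rintro (_ | ⟨b, q⟩) hq
    · simp at hq
    have hlen' : x.length = q.length := by simpa using hq
    have hmem : ∀ v, v ∈ P0 (a :: x) ∩ P1 (b :: q) ↔
        (v = [] ∧ a = false ∧ b = true) ∨
        (∃ v', v = a :: v' ∧ a = b ∧ v' ∈ P0 x ∩ P1 q) := by
      rintro (_ | ⟨c, v⟩)
      · simp [P0, P1, List.cons_prefix_cons, eq_comm]
      · simp only [P0, P1, Set.mem_inter_iff, Set.mem_setOf_eq, List.cons_append,
          List.cons_prefix_cons]
        constructor
        · rintro ⟨⟨rfl, h1⟩, ⟨hcb, h2⟩⟩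
          right
          exact ⟨v, rfl, hcb, h1, h2⟩
        · rintro (⟨h, -⟩ | ⟨v', hv, rfl, h1, h2⟩)
          · simp at h
          · obtain ⟨rfl, rfl⟩ : c = a ∧ v' = v := by
              constructor <;> [skip; skip] <;> injection hv <;> simp_all
            exact ⟨⟨rfl, h1⟩, rfl, h2⟩
    rw [bval_cons, bval_cons, hlen']
    cases a <;> cases b
    · -- a = false, b = false
      rcases ih q hlen' with ⟨hlt, v, hv⟩ | ⟨hnlt, hv⟩
      · left
        refine ⟨by simpa using hlt, false :: v, ?_⟩
        ext w
        rw [hmem w]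
        simp only [Set.mem_singleton_iff]
        constructor
        · rintro (⟨-, -, h⟩ | ⟨v', rfl, -, h⟩)
          · simp at h
          · rw [hv] at h; simp_all
        · rintro rfl
          refine Or.inr ⟨v, rfl, by trivial, ?_⟩
          rw [hv]
          rfl
      · right
        refine ⟨by simpa using hnlt, ?_⟩
        ext w
        rw [hmem w]
        simp only [Set.mem_empty_iff_false, iff_false]
        rintro (⟨-, -, h⟩ | ⟨v', rfl, -, h⟩)
        · simp at h
        · rw [hv] at h; simp at h
    · -- a = false, b = true
      left
      have := bval_lt_pow x
      rw [hlen'] at this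
      refine ⟨by simp; omega, [], ?_⟩
      ext w
      rw [hmem w]
      simp
    · -- a = true, b = false
      right
      have := bval_lt_pow q
      refine ⟨by simp; omega, ?_⟩
      ext w
      rw [hmem w]
      simp
    · -- a = true, b = true
      rcases ih q hlen' with ⟨hlt, v, hv⟩ | ⟨hnlt, hv⟩
      · left
        refine ⟨by simpa using hlt, true :: v, ?_⟩
        ext w
        rw [hmem w]
        simp only [Set.mem_singleton_iff]
        constructor
        · rintro (⟨-, h, -⟩ | ⟨v', rfl, -, h⟩)
          · simp at h
          · rw [hv] at h; simp_all
        · rintro rfl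
          refine Or.inr ⟨v, rfl, by trivial, ?_⟩
          rw [hv]
          rfl
      · right
        refine ⟨by simpa using hnlt, ?_⟩
        ext w
        rw [hmem w]
        simp only [Set.mem_empty_iff_false, iff_false]
        rintro (⟨-, h, -⟩ | ⟨v', rfl, -, h⟩)
        · simp at h
        · rw [hv] at h; simp at h

theorem dominance_count (m : ℕ) (D : Finset (Fin m → List Bool)) (q : Fin m → List Bool)
    (hlen : ∀ d ∈ D, ∀ i, (d i).length = (q i).length) :
    (D.filter (fun d => ∀ i, bval (d i) < bval (q i))).card =
      ∑ d ∈ D, (P0v d ∩ P1v q).ncard := by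
  classical
  rw [Finset.card_filter]
  refine Finset.sum_congr rfl fun d hd => ?_
  have hmem : ∀ v, v ∈ P0v d ∩ P1v q ↔ ∀ i, v i ∈ P0 (d i) ∩ P1 (q i) := by
    intro v
    simp only [P0v, P1v, Set.mem_inter_iff, Set.mem_setOf_eq]
    aesop
  by_cases h : ∀ i, bval (d i) < bval (q i)
  · rw [if_pos h]
    have hw : ∀ i, ∃ w, P0 (d i) ∩ P1 (q i) = {w} := by
      intro i
      rcases key (d i) (q i) (hlen d hd i) with ⟨-, w, hw⟩ | ⟨hn, -⟩
      · exact ⟨w, hw⟩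
      · exact absurd (h i) hn
    choose w hw using hw
    have : P0v d ∩ P1v q = {w} := by
      ext v
      rw [hmem v]
      simp only [Set.mem_singleton_iff]
      constructor
      · intro hv
        funext i
        have := hv i
        rw [hw i] at this
        exact this
      · rintro rfl i
        rw [hw i]; rfl
    rw [this, Set.ncard_singleton]
  · rw [if_neg h]
    push_neg at h
    obtain ⟨i, hi⟩ := h
    have hempty : P0 (d i) ∩ P1 (q i) = ∅ := by
      rcases key (d i) (q i) (hlen d hd i) with ⟨hlt, -⟩ | ⟨-, he⟩
      · exact absurd hlt (not_lt.mpr hi)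
      · exact he
    have : P0v d ∩ P1v q = ∅ := by
      ext v
      rw [hmem v]
      simp only [Set.mem_empty_iff_false, iff_false]
      intro hv
      have := hv i
      rw [hempty] at this
      exact this
    rw [this, Set.ncard_empty]
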